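/- Let ψ : ℝ² → ℝ be twice continuously differentiable with ψ, ∂₁ψ, ∂₁∂₁ψ and ∂₂ψ all bounded. Define φ : ℝ × [0,∞) × ℝ → ℝ by φ(α, β, γ) = ∫∫ ψ(α z₁ + √β z₂, γ z₁) dγ₀(z₁) dγ₀(z₂), where γ₀ is the standard Gaussian measure on ℝ. Then φ is globally Lipschitz on ℝ × [0,∞) × ℝ: there exists a constant L > 0 such that |φ(α,β,γ) − φ(α',β',γ')| ≤ L (|α−α'| + |β−β'| + |γ−γ'|) for all (α,β,γ), (α',β',γ') in ℝ × [0,∞) × ℝ. -/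

import Mathlib

open MeasureTheory ProbabilityTheory

section GFLAux
open Real Filter Set


noncomputable def pdf0 : ℝ → ℝ := gaussianPDFReal 0 1

lemma pdf0_nonneg (x : ℝ) : 0 ≤ pdf0 x := gaussianPDFReal_nonneg 0 1 x

lemma measurable_pdf0 : Measurable pdf0 := measurable_gaussianPDFReal 0 1

lemma pdf0_eq (x : ℝ) : pdf0 x = (√(2 * π))⁻¹ * rexp (-(1/2) * x ^ 2) := by
  simp only [pdf0, gaussianPDFReal]
  norm_num
  ring_nf
  tauto

lemma gauss_eq : gaussianReal 0 1
    = volume.withDensity (fun x => ((pdf0 x).toNNReal : ENNReal)) := by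
  rw [gaussianReal_of_var_ne_zero _ one_ne_zero]
  rfl

lemma integral_gauss (g : ℝ → ℝ) :
    ∫ x, g x ∂(gaussianReal 0 1) = ∫ x, pdf0 x * g x := by
  rw [gauss_eq, integral_withDensity_eq_integral_smul measurable_pdf0.real_toNNReal g]
  congr 1
  ext x
  simp [NNReal.smul_def, Real.coe_toNNReal _ (pdf0_nonneg x)]

lemma integrable_gauss_iff (g : ℝ → ℝ) :
    Integrable g (gaussianReal 0 1) ↔ Integrable (fun x => pdf0 x * g x) volume := by
  rw [gauss_eq, integrable_withDensity_iff_integrable_smul measurable_pdf0.real_toNNReal]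
  constructor <;> intro h <;> refine h.congr (Filter.Eventually.of_forall fun x => ?_) <;>
    simp [NNReal.smul_def, Real.coe_toNNReal _ (pdf0_nonneg x)]

lemma integrable_abs_pdf0 : Integrable (fun x => pdf0 x * |x|) volume := by
  have := (integrable_mul_exp_neg_mul_sq (b := 1/2) (by norm_num)).abs
  refine (this.const_mul (√(2 * π))⁻¹).congr (Filter.Eventually.of_forall fun x => ?_)
  simp only []
  rw [pdf0_eq, abs_mul, abs_of_nonneg (Real.exp_nonneg _)]
  ring

lemma integrable_abs_gauss : Integrable (fun x => |x|) (gaussianReal 0 1) :=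
  (integrable_gauss_iff _).2 integrable_abs_pdf0

lemma pdf0_fun_eq : pdf0 = fun x => (√(2 * π))⁻¹ * rexp (-(1/2) * x ^ 2) :=
  funext pdf0_eq

lemma continuous_pdf0 : Continuous pdf0 := by
  rw [pdf0_fun_eq]; fun_prop

lemma integrable_pdf0 : Integrable pdf0 volume := by
  rw [pdf0_fun_eq]
  exact (integrable_exp_neg_mul_sq (b := 1/2) (by norm_num)).const_mul _

lemma hasDerivAt_pdf0 (x : ℝ) : HasDerivAt pdf0 (-x * pdf0 x) x := by
  have h1 : HasDerivAt (fun t : ℝ => -(1/2) * t ^ 2) (-x) x := by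
    simpa using ((hasDerivAt_pow 2 x).const_mul (-(1/2):ℝ))
  have h2 := (h1.exp).const_mul ((√(2 * π))⁻¹)
  rw [pdf0_fun_eq]
  refine h2.congr_deriv ?_
  show _ = -x * ((√(2 * π))⁻¹ * rexp (-(1/2) * x ^ 2))
  ring

lemma tendsto_sq_atBot : Tendsto (fun x : ℝ => x ^ 2) atBot atTop := by
  have h1 : Tendsto (fun x : ℝ => x ^ 2) atTop atTop := tendsto_pow_atTop two_ne_zero
  have h2 : Tendsto (fun x : ℝ => |x|) atBot atTop := tendsto_abs_atBot_atTop
  exact (h1.comp h2).congr fun x => sq_abs x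

lemma tendsto_pdf0_aux (l : Filter ℝ) (h : Tendsto (fun x : ℝ => x ^ 2) l atTop) :
    Tendsto pdf0 l (nhds 0) := by
  have h2 : Tendsto (fun x : ℝ => -(1/2) * x ^ 2) l atBot :=
    h.const_mul_atTop_of_neg (by norm_num)
  have h3 := (Real.tendsto_exp_atBot.comp h2).const_mul ((√(2 * π))⁻¹)
  rw [mul_zero] at h3
  rw [pdf0_fun_eq]
  exact h3

lemma tendsto_pdf0_atTop : Tendsto pdf0 atTop (nhds 0) :=
  tendsto_pdf0_aux _ (tendsto_pow_atTop two_ne_zero)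

lemma tendsto_pdf0_atBot : Tendsto pdf0 atBot (nhds 0) :=
  tendsto_pdf0_aux _ tendsto_sq_atBot

lemma integral_deriv_zero (H H' : ℝ → ℝ) (hd : ∀ x, HasDerivAt H (H' x) x)
    (hi : Integrable H' volume) (ht : Tendsto H atTop (nhds 0))
    (hbt : Tendsto H atBot (nhds 0)) : ∫ x, H' x = 0 := by
  have h1 : ∫ x in Ioi (0:ℝ), H' x = 0 - H 0 :=
    integral_Ioi_of_hasDerivAt_of_tendsto' (fun x _ => hd x) hi.integrableOn ht
  have h2 : ∫ x in Iic (0:ℝ), H' x = H 0 - 0 :=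
    integral_Iic_of_hasDerivAt_of_tendsto' (fun x _ => hd x) hi.integrableOn hbt
  rw [← intervalIntegral.integral_Iic_add_Ioi hi.integrableOn hi.integrableOn, h1, h2]
  ring

/-- Stein's identity for the standard Gaussian. -/
lemma stein (g g' : ℝ → ℝ) (hd : ∀ x, HasDerivAt g (g' x) x) (hc' : Continuous g')
    (C C' : ℝ) (hgb : ∀ x, |g x| ≤ C) (hg'b : ∀ x, |g' x| ≤ C') :
    ∫ x, x * g x ∂(gaussianReal 0 1) = ∫ x, g' x ∂(gaussianReal 0 1) := by
  have hgc : Continuous g := by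
    have : Differentiable ℝ g := fun x => (hd x).differentiableAt
    exact this.continuous
  have hH : ∀ x, HasDerivAt (fun t => pdf0 t * g t)
      (pdf0 x * g' x - pdf0 x * (x * g x)) x := by
    intro x
    have := (hasDerivAt_pdf0 x).mul (hd x)
    refine this.congr_deriv ?_
    ring
  have hint1 : Integrable (fun x => pdf0 x * g' x) volume := by
    refine (integrable_pdf0.const_mul C').mono'
      (continuous_pdf0.mul hc').aestronglyMeasurable (Eventually.of_forall fun x => ?_)
    rw [Real.norm_eq_abs, abs_mul, abs_of_nonneg (pdf0_nonneg x)]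
    calc pdf0 x * |g' x| ≤ pdf0 x * C' := by
          exact mul_le_mul_of_nonneg_left (hg'b x) (pdf0_nonneg x)
      _ = C' * pdf0 x := by ring
  have hint2 : Integrable (fun x => pdf0 x * (x * g x)) volume := by
    refine (integrable_abs_pdf0.const_mul C).mono'
      (continuous_pdf0.mul (continuous_id.mul hgc)).aestronglyMeasurable
      (Eventually.of_forall fun x => ?_)
    rw [Real.norm_eq_abs, abs_mul, abs_of_nonneg (pdf0_nonneg x), abs_mul]
    have h0 : (0:ℝ) ≤ C := le_trans (abs_nonneg _) (hgb 0)
    calc pdf0 x * (|x| * |g x|) ≤ pdf0 x * (|x| * C) := by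
          refine mul_le_mul_of_nonneg_left ?_ (pdf0_nonneg x)
          exact mul_le_mul_of_nonneg_left (hgb x) (abs_nonneg x)
      _ = C * (pdf0 x * |x|) := by ring
  have h0C : (0:ℝ) ≤ C := le_trans (abs_nonneg _) (hgb 0)
  have hsq : ∀ (l : Filter ℝ), Tendsto pdf0 l (nhds 0) →
      Tendsto (fun x => pdf0 x * g x) l (nhds 0) := by
    intro l hl
    refine squeeze_zero_norm (fun x => ?_) (by simpa using hl.const_mul C)
    rw [Real.norm_eq_abs, abs_mul, abs_of_nonneg (pdf0_nonneg x)]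
    exact mul_le_mul_of_nonneg_left (hgb x) (pdf0_nonneg x) |>.trans (by ring_nf; rfl)
  have hzero : ∫ x, (pdf0 x * g' x - pdf0 x * (x * g x)) = 0 := by
    refine integral_deriv_zero _ _ hH (hint1.sub hint2)
      (hsq _ tendsto_pdf0_atTop) (hsq _ tendsto_pdf0_atBot)
  rw [integral_gauss, integral_gauss]
  have := integral_sub hint1 hint2
  rw [hzero] at this
  linarith [this.symm]

lemma integrable_bdd_gauss (h : ℝ → ℝ) (C : ℝ) (hm : Continuous h) (hbd : ∀ x, |h x| ≤ C) :
    Integrable h (gaussianReal 0 1) :=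
  (integrable_const C).mono' hm.aestronglyMeasurable (Eventually.of_forall fun x => hbd x)


section psi
variable (ψ : ℝ × ℝ → ℝ) (hψ : ContDiff ℝ 2 ψ) (M : ℝ)
    (hb : ∀ x, |ψ x| ≤ M)
    (hb1 : ∀ x, |fderiv ℝ ψ x (1, 0)| ≤ M)
    (hb11 : ∀ x, |fderiv ℝ (fun y => fderiv ℝ ψ y (1, 0)) x (1, 0)| ≤ M)
    (hb2 : ∀ x, |fderiv ℝ ψ x (0, 1)| ≤ M)

include hψ hb1 hb2 in
lemma psi_lip (p q : ℝ × ℝ) : |ψ p - ψ q| ≤ M * (|p.1 - q.1| + |p.2 - q.2|) := by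
  have hdiff : Differentiable ℝ ψ := hψ.differentiable two_ne_zero
  set K := M * (|p.1 - q.1| + |p.2 - q.2|) with hK
  have hline : ∀ t : ℝ, HasDerivAt (fun t : ℝ => q + t • (p - q)) (p - q) t := by
    intro t
    simpa using ((hasDerivAt_id t).smul_const (p - q)).const_add q
  have hg : ∀ t : ℝ, HasDerivAt (fun t => ψ (q + t • (p - q)))
      (fderiv ℝ ψ (q + t • (p - q)) (p - q)) t := by
    intro t
    exact (hdiff (q + t • (p - q))).hasFDerivAt.comp_hasDerivAt t (hline t)
  have hbound : ∀ t : ℝ, |fderiv ℝ ψ (q + t • (p - q)) (p - q)| ≤ K := by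
    intro t
    set y := q + t • (p - q)
    have hdecomp : (p - q) = (p.1 - q.1) • ((1:ℝ), (0:ℝ)) + (p.2 - q.2) • ((0:ℝ), (1:ℝ)) := by
      simp [Prod.ext_iff]
    rw [hdecomp, map_add, _root_.map_smul, _root_.map_smul]
    have h1 := hb1 y
    have h2 := hb2 y
    have hM : 0 ≤ M := le_trans (abs_nonneg _) (hb1 0)
    calc |(p.1 - q.1) • fderiv ℝ ψ y (1, 0) + (p.2 - q.2) • fderiv ℝ ψ y (0, 1)|
        ≤ |(p.1 - q.1) • fderiv ℝ ψ y (1, 0)| + |(p.2 - q.2) • fderiv ℝ ψ y (0, 1)| :=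
          abs_add_le _ _
      _ = |p.1 - q.1| * |fderiv ℝ ψ y (1, 0)| + |p.2 - q.2| * |fderiv ℝ ψ y (0, 1)| := by
          simp [abs_mul]
      _ ≤ |p.1 - q.1| * M + |p.2 - q.2| * M := by
          gcongr
      _ = K := by rw [hK]; ring
  have := Convex.norm_image_sub_le_of_norm_hasDerivWithin_le
    (f := fun t => ψ (q + t • (p - q))) (s := Set.univ)
    (fun t _ => (hg t).hasDerivWithinAt) (fun t _ => hbound t) convex_univ
    (Set.mem_univ (0:ℝ)) (Set.mem_univ (1:ℝ))
  simpa using this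

include hψ hb hb1 hb11 in
lemma beta_lip (a c : ℝ) {β β' : ℝ} (hβ : 0 ≤ β) (hβ' : 0 ≤ β') :
    |(∫ z, ψ (a + Real.sqrt β * z, c) ∂(gaussianReal 0 1))
      - ∫ z, ψ (a + Real.sqrt β' * z, c) ∂(gaussianReal 0 1)| ≤ M * |β - β'| := by
  have hM : 0 ≤ M := le_trans (abs_nonneg _) (hb 0)
  have hdiff : Differentiable ℝ ψ := hψ.differentiable two_ne_zero
  set G : ℝ × ℝ → ℝ := fun y => fderiv ℝ ψ y (1, 0) with hGdef
  have hG : ContDiff ℝ 1 G :=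
    (hψ.fderiv_right (m := 1) (by norm_num)).clm_apply contDiff_const
  have hGdiffble : Differentiable ℝ G := hG.differentiable one_ne_zero
  have hGcont : Continuous G := hG.continuous
  have hG'cont : Continuous (fun y => fderiv ℝ G y ((1:ℝ), (0:ℝ))) :=
    ((hG.fderiv_right (m := 0) (by norm_num)).clm_apply contDiff_const).continuous
  set f : ℝ → ℝ := fun s => ∫ z, ψ (a + s * z, c) ∂(gaussianReal 0 1) with hfdef
  -- curve derivative
  have hcurve : ∀ (s z : ℝ), HasDerivAt (fun s : ℝ => ((a + s * z, c) : ℝ × ℝ))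
      ((z, 0) : ℝ × ℝ) s := by
    intro s z
    simpa using (((hasDerivAt_id s).mul_const z).const_add a).prodMk (hasDerivAt_const s c)
  have hFz : ∀ (s z : ℝ), HasDerivAt (fun s => ψ (a + s * z, c)) (z * G (a + s * z, c)) s := by
    intro s z
    have h1 := (hdiff (a + s * z, c)).hasFDerivAt.comp_hasDerivAt s (hcurve s z)
    refine h1.congr_deriv ?_
    have : ((z, 0) : ℝ × ℝ) = z • ((1:ℝ), (0:ℝ)) := by simp
    rw [this, _root_.map_smul]
    simp [hGdef]
  -- derivative of f
  have hf' : ∀ s : ℝ, HasDerivAt f (∫ z, z * G (a + s * z, c) ∂(gaussianReal 0 1)) s := by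
    intro s₀
    have := hasDerivAt_integral_of_dominated_loc_of_deriv_le (μ := gaussianReal 0 1)
      (F := fun s z => ψ (a + s * z, c)) (F' := fun s z => z * G (a + s * z, c))
      (x₀ := s₀) (bound := fun z => M * |z|) (s := Set.univ) Filter.univ_mem
      (Eventually.of_forall fun s =>
        (hψ.continuous.comp (by fun_prop)).aestronglyMeasurable)
      (integrable_bdd_gauss _ M (hψ.continuous.comp (by fun_prop)) (fun z => hb _))
      ((continuous_id.mul (hGcont.comp (by fun_prop))).aestronglyMeasurable)
      (Eventually.of_forall fun z s _ => by
        rw [Real.norm_eq_abs, abs_mul, mul_comm]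
        exact mul_le_mul_of_nonneg_right (hb1 _) (abs_nonneg z))
      (integrable_abs_gauss.const_mul M)
      (Eventually.of_forall fun z s _ => hFz s z)
    exact this.2
  -- Stein rewrite of the derivative and bound
  have hf'bound : ∀ s : ℝ, |∫ z, z * G (a + s * z, c) ∂(gaussianReal 0 1)| ≤ M * |s| := by
    intro s
    have hgd : ∀ z : ℝ, HasDerivAt (fun z => G (a + s * z, c))
        (s * fderiv ℝ G (a + s * z, c) (1, 0)) z := by
      intro z
      have hcurve2 : HasDerivAt (fun z : ℝ => ((a + s * z, c) : ℝ × ℝ)) ((s, 0) : ℝ × ℝ) z := by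
        have := ((hasDerivAt_const z a).add ((hasDerivAt_id z).const_mul s)).prodMk
          (hasDerivAt_const z c)
        simpa using this
      have h1 := (hGdiffble (a + s * z, c)).hasFDerivAt.comp_hasDerivAt z hcurve2
      refine h1.congr_deriv ?_
      have : ((s, 0) : ℝ × ℝ) = s • ((1:ℝ), (0:ℝ)) := by simp
      rw [this, _root_.map_smul]
      simp
    have hsteq := stein (fun z => G (a + s * z, c))
      (fun z => s * fderiv ℝ G (a + s * z, c) (1, 0)) hgd
      (by exact (continuous_const.mul (hG'cont.comp (by fun_prop))))
      M (|s| * M)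
      (fun z => hb1 _)
      (fun z => by
        rw [abs_mul]
        exact mul_le_mul_of_nonneg_left (hb11 _) (abs_nonneg s))
    rw [hsteq]
    have : ∀ z : ℝ, ‖s * fderiv ℝ G (a + s * z, c) (1, 0)‖ ≤ M * |s| := by
      intro z
      rw [Real.norm_eq_abs, abs_mul, mul_comm]
      exact mul_le_mul_of_nonneg_right (hb11 _) (abs_nonneg s)
    have hle := norm_integral_le_of_norm_le (μ := gaussianReal 0 1)
      (integrable_const (M * |s|)) (Eventually.of_forall this)
    simpa using hle
  -- mean value estimate
  have key : ∀ s s' : ℝ, 0 ≤ s' → s' ≤ s → |f s - f s'| ≤ M * (s ^ 2 - s' ^ 2) := by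
    intro s s' hs' hss
    have hsnn : 0 ≤ s := le_trans hs' hss
    have hmv := Convex.norm_image_sub_le_of_norm_hasDerivWithin_le
      (f := f) (f' := fun t => ∫ z, z * G (a + t * z, c) ∂(gaussianReal 0 1))
      (s := Icc s' s) (C := M * s)
      (fun t _ => (hf' t).hasDerivWithinAt)
      (fun t ht => by
        rw [Real.norm_eq_abs]
        refine (hf'bound t).trans ?_
        rw [abs_of_nonneg (le_trans hs' ht.1)]
        exact mul_le_mul_of_nonneg_left ht.2 hM)
      (convex_Icc s' s) (left_mem_Icc.2 hss) (right_mem_Icc.2 hss)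
    rw [Real.norm_eq_abs, Real.norm_eq_abs] at hmv
    have h2 : |s - s'| = s - s' := abs_of_nonneg (by linarith)
    rw [h2] at hmv
    nlinarith [mul_nonneg (mul_nonneg hM hs') (sub_nonneg.2 hss)]
  -- conclude
  rcases le_total (Real.sqrt β') (Real.sqrt β) with h | h
  · have := key _ _ (Real.sqrt_nonneg β') h
    rw [Real.sq_sqrt hβ, Real.sq_sqrt hβ'] at this
    have hββ' : β' ≤ β := by
      nlinarith [Real.sq_sqrt hβ, Real.sq_sqrt hβ', Real.sqrt_nonneg β, Real.sqrt_nonneg β']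
    calc |f (Real.sqrt β) - f (Real.sqrt β')| ≤ M * (β - β') := this
      _ = M * |β - β'| := by rw [abs_of_nonneg (by linarith)]
  · have := key _ _ (Real.sqrt_nonneg β) h
    rw [Real.sq_sqrt hβ, Real.sq_sqrt hβ'] at this
    have hββ' : β ≤ β' := by
      nlinarith [Real.sq_sqrt hβ, Real.sq_sqrt hβ', Real.sqrt_nonneg β, Real.sqrt_nonneg β']
    rw [abs_sub_comm]
    calc |f (Real.sqrt β') - f (Real.sqrt β)| ≤ M * (β' - β) := this
      _ = M * |β - β'| := by rw [abs_sub_comm, abs_of_nonneg (by linarith)]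

end psi
end GFLAux

/-- if `ψ : ℝ² → ℝ` is `C²` with `ψ, ∂₁ψ, ∂₁∂₁ψ, ∂₂ψ` bounded, then
`φ(α,β,γ) = E[ψ(α Z₁ + √β Z₂, γ Z₁)]` (for independent standard Gaussians `Z₁, Z₂`)
is globally Lipschitz on `ℝ × [0,∞) × ℝ`. -/
theorem gaussian_functional_lipschitz (ψ : ℝ × ℝ → ℝ) (hψ : ContDiff ℝ 2 ψ)
    (M : ℝ)
    (hb : ∀ x, |ψ x| ≤ M)
    (hb1 : ∀ x, |fderiv ℝ ψ x (1, 0)| ≤ M)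
    (hb11 : ∀ x, |fderiv ℝ (fun y => fderiv ℝ ψ y (1, 0)) x (1, 0)| ≤ M)
    (hb2 : ∀ x, |fderiv ℝ ψ x (0, 1)| ≤ M) :
    ∃ L > 0, ∀ α β γ α' β' γ' : ℝ, 0 ≤ β → 0 ≤ β' →
      |(∫ z₁, ∫ z₂, ψ (α * z₁ + Real.sqrt β * z₂, γ * z₁)
            ∂(gaussianReal 0 1) ∂(gaussianReal 0 1))
        - ∫ z₁, ∫ z₂, ψ (α' * z₁ + Real.sqrt β' * z₂, γ' * z₁)
            ∂(gaussianReal 0 1) ∂(gaussianReal 0 1)|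
        ≤ L * (|α - α'| + |β - β'| + |γ - γ'|) := by
  have hM : 0 ≤ M := le_trans (abs_nonneg _) (hb 0)
  set γm := gaussianReal 0 1 with hγm
  set C₁ : ℝ := ∫ z, |z| ∂γm with hC₁def
  have hC₁ : 0 ≤ C₁ := integral_nonneg fun z => abs_nonneg z
  refine ⟨M * C₁ + M + 1, by positivity, fun α β γc α' β' γc' hβ hβ' => ?_⟩
  set inn : ℝ → ℝ → ℝ → ℝ → ℝ :=
    fun α β γc z₁ => ∫ z₂, ψ (α * z₁ + Real.sqrt β * z₂, γc * z₁) ∂γm with hinn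
  -- basic facts about inn
  have hInnerInt : ∀ α β γc z₁ : ℝ,
      Integrable (fun z₂ => ψ (α * z₁ + Real.sqrt β * z₂, γc * z₁)) γm := by
    intro α β γc z₁
    exact integrable_bdd_gauss _ M (hψ.continuous.comp (by fun_prop)) (fun z => hb _)
  have hbdd : ∀ α β γc z₁ : ℝ, |inn α β γc z₁| ≤ M := by
    intro α β γc z₁
    have := norm_integral_le_of_norm_le (μ := γm) (integrable_const M)
      (Filter.Eventually.of_forall fun z₂ => by
        rw [Real.norm_eq_abs]
        exact hb (α * z₁ + Real.sqrt β * z₂, γc * z₁))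
    simpa using this
  have hAESM : ∀ α β γc : ℝ, AEStronglyMeasurable (inn α β γc) γm := by
    intro α β γc
    have hSM : StronglyMeasurable (fun p : ℝ × ℝ =>
        ψ (α * p.1 + Real.sqrt β * p.2, γc * p.1)) :=
      (hψ.continuous.comp (by fun_prop)).stronglyMeasurable
    exact hSM.integral_prod_right'.aestronglyMeasurable
  have hInt : ∀ α β γc : ℝ, Integrable (inn α β γc) γm := by
    intro α β γc
    exact (integrable_const M).mono' (hAESM α β γc)
      (Filter.Eventually.of_forall fun z₁ => hbdd α β γc z₁)
  -- step 1 : move α and γ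
  have step1 : |(∫ z₁, inn α β γc z₁ ∂γm) - ∫ z₁, inn α' β γc' z₁ ∂γm|
      ≤ M * (|α - α'| + |γc - γc'|) * C₁ := by
    rw [← integral_sub (hInt α β γc) (hInt α' β γc')]
    have hptwise : ∀ z₁ : ℝ, ‖inn α β γc z₁ - inn α' β γc' z₁‖
        ≤ M * (|α - α'| + |γc - γc'|) * |z₁| := by
      intro z₁
      rw [hinn]
      simp only []
      rw [← integral_sub (hInnerInt α β γc z₁) (hInnerInt α' β γc' z₁)]
      have hb' : ∀ z₂ : ℝ, ‖ψ (α * z₁ + Real.sqrt β * z₂, γc * z₁)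
          - ψ (α' * z₁ + Real.sqrt β * z₂, γc' * z₁)‖
          ≤ M * (|α - α'| + |γc - γc'|) * |z₁| := by
        intro z₂
        rw [Real.norm_eq_abs]
        refine (psi_lip ψ hψ M hb1 hb2 _ _).trans (le_of_eq ?_)
        simp only []
        rw [show α * z₁ + Real.sqrt β * z₂ - (α' * z₁ + Real.sqrt β * z₂) = (α - α') * z₁ by ring,
          show γc * z₁ - γc' * z₁ = (γc - γc') * z₁ by ring, abs_mul, abs_mul]
        ring
      have := norm_integral_le_of_norm_le (μ := γm)
        (integrable_const (M * (|α - α'| + |γc - γc'|) * |z₁|))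
        (Filter.Eventually.of_forall hb')
      simpa using this
    have := norm_integral_le_of_norm_le (μ := γm)
      ((integrable_abs_gauss.const_mul (M * (|α - α'| + |γc - γc'|))))
      (Filter.Eventually.of_forall hptwise)
    refine this.trans (le_of_eq ?_)
    rw [hC₁def, integral_const_mul]
  -- step 2 : move β
  have step2 : |(∫ z₁, inn α' β γc' z₁ ∂γm) - ∫ z₁, inn α' β' γc' z₁ ∂γm|
      ≤ M * |β - β'| := by
    rw [← integral_sub (hInt α' β γc') (hInt α' β' γc')]
    have hptwise : ∀ z₁ : ℝ, ‖inn α' β γc' z₁ - inn α' β' γc' z₁‖ ≤ M * |β - β'| := by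
      intro z₁
      rw [Real.norm_eq_abs, hinn]
      simp only []
      exact beta_lip ψ hψ M hb hb1 hb11 (α' * z₁) (γc' * z₁) hβ hβ'
    have := norm_integral_le_of_norm_le (μ := γm)
      (integrable_const (M * |β - β'|)) (Filter.Eventually.of_forall hptwise)
    simpa using this
  -- conclusion
  have htri : |(∫ z₁, inn α β γc z₁ ∂γm) - ∫ z₁, inn α' β' γc' z₁ ∂γm|
      ≤ M * (|α - α'| + |γc - γc'|) * C₁ + M * |β - β'| := by
    calc |(∫ z₁, inn α β γc z₁ ∂γm) - ∫ z₁, inn α' β' γc' z₁ ∂γm|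
        ≤ |(∫ z₁, inn α β γc z₁ ∂γm) - ∫ z₁, inn α' β γc' z₁ ∂γm|
          + |(∫ z₁, inn α' β γc' z₁ ∂γm) - ∫ z₁, inn α' β' γc' z₁ ∂γm| := abs_sub_le _ _ _
      _ ≤ M * (|α - α'| + |γc - γc'|) * C₁ + M * |β - β'| := add_le_add step1 step2
  refine htri.trans ?_
  have h1 : 0 ≤ |α - α'| := abs_nonneg _
  have h2 : 0 ≤ |β - β'| := abs_nonneg _
  have h3 : 0 ≤ |γc - γc'| := abs_nonneg _
  nlinarith [mul_nonneg (mul_nonneg hM hC₁) h2, mul_nonneg hM h1, mul_nonneg hM h3,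
    mul_nonneg (mul_nonneg hM hC₁) h1, mul_nonneg (mul_nonneg hM hC₁) h3]
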